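/- Let f : ℝⁿ × (0,T) → ℝ be smooth, satisfy −Δf = a·f + ‖∇f‖² − ∂ₜf, and suppose Hess f satisfies the dimensional Bochner inequality (1/2)Δ‖∇f‖² − ⟨∇(Δf), ∇f⟩ ≥ −K‖∇f‖² + (Δf)²/N for constants K ≥ 0 and N > 0. For β > 1 set H := t(‖∇f‖² + β(af − ∂ₜf)). Then ΔH + 2⟨∇f, ∇H⟩ − ∂ₜH ≥ (2t/N)·(−H/(βt) − (1 − 1/β)‖∇f‖²)² + t((β−1)a − 2K)‖∇f‖² − aH − H/t pointwise. -/

import Mathlib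

open RealInnerProductSpace

noncomputable def lap {n : ℕ} (f : EuclideanSpace ℝ (Fin n) → ℝ)
    (x : EuclideanSpace ℝ (Fin n)) : ℝ :=
  ∑ i : Fin n, fderiv ℝ (fun y => fderiv ℝ f y (EuclideanSpace.single i 1)) x
    (EuclideanSpace.single i 1)

/-! ### Auxiliary infrastructure: directional partial derivatives -/

open Topology

section pdsec
variable {X : Type*} [NormedAddCommGroup X] [NormedSpace ℝ X]

noncomputable def pd (g : X → ℝ) (w : X) : X → ℝ := fun p => fderiv ℝ g p w

theorem pd_contDiff {g : X → ℝ} (hg : ContDiff ℝ (⊤ : ℕ∞) g) (w : X) : ContDiff ℝ (⊤ : ℕ∞) (pd g w) :=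
  (ContinuousLinearMap.apply ℝ ℝ w).contDiff.comp (hg.fderiv_right (by simp))

theorem pd_comm {g : X → ℝ} (hg : ContDiff ℝ (⊤ : ℕ∞) g) (v w : X) (p : X) :
    pd (pd g w) v p = pd (pd g v) w p := by
  have hd : ∀ y, HasFDerivAt g (fderiv ℝ g y) y := fun y =>
    (hg.differentiable (by simp) y).hasFDerivAt
  have h2 : HasFDerivAt (fderiv ℝ g) (fderiv ℝ (fderiv ℝ g) p) p :=
    ((hg.fderiv_right (m := (⊤ : ℕ∞)) (by simp)).differentiable (by simp) p).hasFDerivAt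
  have e1 : ∀ u z : X, fderiv ℝ (fun q => fderiv ℝ g q u) p z
      = (fderiv ℝ (fderiv ℝ g) p) z u := by
    intro u z
    have h3 : HasFDerivAt (fun q => fderiv ℝ g q u)
        ((ContinuousLinearMap.apply ℝ ℝ u).comp (fderiv ℝ (fderiv ℝ g) p)) p :=
      (ContinuousLinearMap.apply ℝ ℝ u).hasFDerivAt.comp p h2
    rw [h3.fderiv]; rfl
  show fderiv ℝ (fun q => fderiv ℝ g q w) p v = fderiv ℝ (fun q => fderiv ℝ g q v) p w
  rw [e1, e1]
  exact second_derivative_symmetric hd h2 v w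

theorem pd_const_mul {g : X → ℝ} (hg : Differentiable ℝ g) (c : ℝ) (w p : X) :
    pd (fun q => c * g q) w p = c * pd g w p := by
  show fderiv ℝ _ p w = _
  rw [fderiv_const_mul (hg p)]; rfl

theorem pd_sum {ι : Type*} (s : Finset ι) (g : ι → X → ℝ)
    (hg : ∀ i, Differentiable ℝ (g i)) (w p : X) :
    pd (fun q => ∑ i ∈ s, g i q) w p = ∑ i ∈ s, pd (g i) w p := by
  show fderiv ℝ _ p w = _
  rw [fderiv_fun_sum (fun i _ => (hg i p))]
  simp [pd]

theorem pd_sq {g : X → ℝ} (hg : Differentiable ℝ g) (w p : X) :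
    pd (fun q => g q ^ 2) w p = 2 * g p * pd g w p := by
  have h : HasFDerivAt (fun q => g q ^ 2)
      (g p • fderiv ℝ g p + g p • fderiv ℝ g p) p := by
    have := ((hg p).hasFDerivAt.mul (hg p).hasFDerivAt)
    simp only [pow_two]; exact this
  show fderiv ℝ _ p w = _
  rw [h.fderiv]; simp [pd]; ring

theorem pd_congr_of_isOpen {g h : X → ℝ} {U : Set X} (hU : IsOpen U) (hgh : Set.EqOn g h U)
    {p : X} (hp : p ∈ U) (w : X) : pd g w p = pd h w p := by
  have : g =ᶠ[𝓝 p] h := Filter.eventuallyEq_of_mem (hU.mem_nhds hp) hgh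
  show fderiv ℝ g p w = fderiv ℝ h p w
  rw [this.fderiv_eq]

theorem pd_lin3 {A B C : X → ℝ} (hA : Differentiable ℝ A) (hB : Differentiable ℝ B)
    (hC : Differentiable ℝ C) (a : ℝ) (w p : X) :
    pd (fun q => a * A q + B q + C q) w p = a * pd A w p + pd B w p + pd C w p := by
  have h : HasFDerivAt (fun q => a * A q + B q + C q)
      ((a • fderiv ℝ A p + fderiv ℝ B p) + fderiv ℝ C p) p :=
    (((hA p).hasFDerivAt.const_mul a).add (hB p).hasFDerivAt).add (hC p).hasFDerivAt
  show fderiv ℝ _ p w = _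
  rw [h.fderiv]; simp [pd]

theorem pd_comb {A B C : X → ℝ} (hA : Differentiable ℝ A) (hB : Differentiable ℝ B)
    (hC : Differentiable ℝ C) (β a : ℝ) (w p : X) :
    pd (fun q => A q + β * (a * B q - C q)) w p
      = pd A w p + β * (a * pd B w p - pd C w p) := by
  have h : HasFDerivAt (fun q => A q + β * (a * B q - C q))
      (fderiv ℝ A p + β • (a • fderiv ℝ B p - fderiv ℝ C p)) p :=
    (hA p).hasFDerivAt.add
      ((((hB p).hasFDerivAt.const_mul a).sub (hC p).hasFDerivAt).const_mul β)
  show fderiv ℝ _ p w = _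
  rw [h.fderiv]; simp [pd]

end pdsec

/-! ### Euclidean gradient lemmas -/

section esec
variable {n : ℕ}

theorem grad_apply (g : EuclideanSpace ℝ (Fin n) → ℝ) (x : EuclideanSpace ℝ (Fin n)) (i : Fin n) :
    gradient g x i = fderiv ℝ g x (EuclideanSpace.single i 1) := by
  have h : ⟪gradient g x, EuclideanSpace.single i (1:ℝ)⟫
      = fderiv ℝ g x (EuclideanSpace.single i 1) :=
    InnerProductSpace.toDual_symm_apply
  rw [EuclideanSpace.inner_single_right] at h
  simpa using h

theorem inner_grad_grad (g h : EuclideanSpace ℝ (Fin n) → ℝ) (x : EuclideanSpace ℝ (Fin n)) :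
    ⟪gradient g x, gradient h x⟫ = ∑ i : Fin n,
      fderiv ℝ g x (EuclideanSpace.single i 1) * fderiv ℝ h x (EuclideanSpace.single i 1) := by
  rw [PiLp.inner_apply]
  refine Finset.sum_congr rfl fun i _ => ?_
  rw [← grad_apply, ← grad_apply]
  simp [RCLike.inner_apply, mul_comm]

theorem norm_grad_sq (g : EuclideanSpace ℝ (Fin n) → ℝ) (x : EuclideanSpace ℝ (Fin n)) :
    ‖gradient g x‖ ^ 2 = ∑ i : Fin n, (fderiv ℝ g x (EuclideanSpace.single i 1)) ^ 2 := by
  rw [← real_inner_self_eq_norm_sq, inner_grad_grad]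
  exact Finset.sum_congr rfl fun i _ => (sq _).symm

end esec

/-! ### Slice lemmas and the functions Q, L, G -/

section slicesec
variable {n : ℕ}

noncomputable def QQ (F : EuclideanSpace ℝ (Fin n) × ℝ → ℝ) :
    EuclideanSpace ℝ (Fin n) × ℝ → ℝ :=
  fun p => ∑ i : Fin n, (pd F (EuclideanSpace.single i 1, 0) p) ^ 2

noncomputable def LL (F : EuclideanSpace ℝ (Fin n) × ℝ → ℝ) :
    EuclideanSpace ℝ (Fin n) × ℝ → ℝ :=
  fun p => ∑ i : Fin n,
    pd (pd F (EuclideanSpace.single i 1, 0)) (EuclideanSpace.single i 1, 0) p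

noncomputable def GG (F : EuclideanSpace ℝ (Fin n) × ℝ → ℝ) (a β : ℝ) :
    EuclideanSpace ℝ (Fin n) × ℝ → ℝ :=
  fun q => QQ F q + β * (a * F q - pd F (0, 1) q)

variable {g h : EuclideanSpace ℝ (Fin n) × ℝ → ℝ}

theorem QQ_contDiff (hg : ContDiff ℝ (⊤ : ℕ∞) g) : ContDiff ℝ (⊤ : ℕ∞) (QQ g) :=
  ContDiff.sum fun i _ => (pd_contDiff hg _).pow 2

theorem LL_contDiff (hg : ContDiff ℝ (⊤ : ℕ∞) g) : ContDiff ℝ (⊤ : ℕ∞) (LL g) :=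
  ContDiff.sum fun i _ => pd_contDiff (pd_contDiff hg _) _

theorem GG_contDiff (hg : ContDiff ℝ (⊤ : ℕ∞) g) (a β : ℝ) : ContDiff ℝ (⊤ : ℕ∞) (GG g a β) :=
  (QQ_contDiff hg).add (contDiff_const.mul ((contDiff_const.mul hg).sub (pd_contDiff hg _)))

theorem slice_fst (hg : Differentiable ℝ g) (t : ℝ) (x v : EuclideanSpace ℝ (Fin n)) :
    fderiv ℝ (fun y => g (y, t)) x v = pd g (v, 0) (x, t) := by
  have h : HasFDerivAt (fun y => g (y, t))
      ((fderiv ℝ g (x, t)).comp (ContinuousLinearMap.inl ℝ (EuclideanSpace ℝ (Fin n)) ℝ)) x :=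
    (hg (x, t)).hasFDerivAt.comp x (hasFDerivAt_prodMk_left x t)
  rw [h.fderiv]
  rfl

theorem hasDerivAt_slice (hg : Differentiable ℝ g) (x : EuclideanSpace ℝ (Fin n)) (t : ℝ) :
    HasDerivAt (fun s => g (x, s)) (pd g (0, 1) (x, t)) t := by
  have h : HasFDerivAt (fun s => g (x, s))
      ((fderiv ℝ g (x, t)).comp (ContinuousLinearMap.inr ℝ (EuclideanSpace ℝ (Fin n)) ℝ)) t :=
    (hg (x, t)).hasFDerivAt.comp t (hasFDerivAt_prodMk_right x t)
  have h2 := h.hasDerivAt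
  simpa [pd] using h2

theorem slice_snd (hg : Differentiable ℝ g) (x : EuclideanSpace ℝ (Fin n)) (t : ℝ) :
    deriv (fun s => g (x, s)) t = pd g (0, 1) (x, t) :=
  (hasDerivAt_slice hg x t).deriv

theorem norm_grad_slice (hg : Differentiable ℝ g) (t : ℝ) (x : EuclideanSpace ℝ (Fin n)) :
    ‖gradient (fun y => g (y, t)) x‖ ^ 2 = QQ g (x, t) := by
  rw [norm_grad_sq]
  exact Finset.sum_congr rfl fun i _ => by rw [slice_fst hg]

theorem inner_grad_slice (hg : Differentiable ℝ g) (hh : Differentiable ℝ h) (t : ℝ)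
    (x : EuclideanSpace ℝ (Fin n)) :
    ⟪gradient (fun y => g (y, t)) x, gradient (fun y => h (y, t)) x⟫
      = ∑ i : Fin n, pd g (EuclideanSpace.single i 1, 0) (x, t)
          * pd h (EuclideanSpace.single i 1, 0) (x, t) := by
  rw [inner_grad_grad]
  exact Finset.sum_congr rfl fun i _ => by rw [slice_fst hg, slice_fst hh]

theorem lap_sliceLL (hg : ContDiff ℝ (⊤ : ℕ∞) g) (x : EuclideanSpace ℝ (Fin n)) (t : ℝ) :
    lap (fun y => g (y, t)) x = LL g (x, t) := by
  unfold lap LL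
  refine Finset.sum_congr rfl fun i _ => ?_
  have hg' : Differentiable ℝ g := hg.differentiable (by simp)
  have hinner : (fun y => fderiv ℝ (fun z => g (z, t)) y (EuclideanSpace.single i 1))
      = fun y => pd g (EuclideanSpace.single i 1, 0) (y, t) := by
    funext y
    exact slice_fst hg' t y (EuclideanSpace.single i 1)
  rw [hinner]
  have hpdg : Differentiable ℝ (pd g (EuclideanSpace.single i 1, 0)) :=
    (pd_contDiff hg _).differentiable (by simp)
  exact slice_fst hpdg t x (EuclideanSpace.single i 1)

end slicesec

set_option maxHeartbeats 2000000 in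
theorem liyau_key_inequality {n : ℕ} (f : EuclideanSpace ℝ (Fin n) → ℝ → ℝ)
    (a T K N β : ℝ) (hK : 0 ≤ K) (hN : 0 < N) (hβ : 1 < β)
    (hsmooth : ContDiff ℝ (⊤ : ℕ∞) (fun p : EuclideanSpace ℝ (Fin n) × ℝ => f p.1 p.2))
    (heq : ∀ x, ∀ t ∈ Set.Ioo (0 : ℝ) T,
      -(lap (fun y => f y t) x) =
        a * f x t + ‖gradient (fun y => f y t) x‖ ^ 2 - deriv (f x) t)
    (hBochner : ∀ x, ∀ t ∈ Set.Ioo (0 : ℝ) T,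
      1 / 2 * lap (fun y => ‖gradient (fun z => f z t) y‖ ^ 2) x
        - ⟪gradient (fun y => lap (fun z => f z t) y) x, gradient (fun y => f y t) x⟫ ≥
        -K * ‖gradient (fun y => f y t) x‖ ^ 2 + (lap (fun y => f y t) x) ^ 2 / N) :
    ∀ x, ∀ t ∈ Set.Ioo (0 : ℝ) T,
      (fun H : EuclideanSpace ℝ (Fin n) → ℝ → ℝ =>
        lap (fun y => H y t) x + 2 * ⟪gradient (fun y => f y t) x, gradient (fun y => H y t) x⟫
            - deriv (H x) t ≥
          2 * t / N * (-(H x t) / (β * t) - (1 - 1 / β) * ‖gradient (fun y => f y t) x‖ ^ 2) ^ 2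
            + t * ((β - 1) * a - 2 * K) * ‖gradient (fun y => f y t) x‖ ^ 2
            - a * H x t - H x t / t)
      (fun y s => s * (‖gradient (fun z => f z s) y‖ ^ 2 + β * (a * f y s - deriv (f y) s))) := by
  intro x t ht
  beta_reduce
  set F : EuclideanSpace ℝ (Fin n) × ℝ → ℝ := fun p => f p.1 p.2 with hFdef
  have hF : ContDiff ℝ (⊤ : ℕ∞) F := hsmooth
  have hFd : Differentiable ℝ F := hF.differentiable (by simp)
  have hQc : ContDiff ℝ (⊤ : ℕ∞) (QQ F) := QQ_contDiff hF
  have hQd : Differentiable ℝ (QQ F) := hQc.differentiable (by simp)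
  have hLc : ContDiff ℝ (⊤ : ℕ∞) (LL F) := LL_contDiff hF
  have hLd : Differentiable ℝ (LL F) := hLc.differentiable (by simp)
  have hftc : ContDiff ℝ (⊤ : ℕ∞) (pd F (0, 1)) := pd_contDiff hF _
  have hftd : Differentiable ℝ (pd F (0, 1)) := hftc.differentiable (by simp)
  have hGc : ContDiff ℝ (⊤ : ℕ∞) (GG F a β) := GG_contDiff hF a β
  have hGd : Differentiable ℝ (GG F a β) := hGc.differentiable (by simp)
  have ht0 : (0 : ℝ) < t := ht.1
  have hβ0 : (0 : ℝ) < β := lt_trans one_pos hβ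
  -- the open domain
  set U : Set (EuclideanSpace ℝ (Fin n) × ℝ) := Set.univ ×ˢ Set.Ioo 0 T with hUdef
  have hU : IsOpen U := isOpen_univ.prod isOpen_Ioo
  have hpU : (x, t) ∈ U := ⟨Set.mem_univ x, ht⟩
  -- the PDE as an identity on U
  have hpde : Set.EqOn (pd F (0, 1)) (fun q => a * F q + QQ F q + LL F q) U := by
    intro q hq
    obtain ⟨y, s⟩ := q
    have hs : s ∈ Set.Ioo (0 : ℝ) T := hq.2
    have h1 := heq y s hs
    have h2 : lap (fun z => f z s) y = LL F (y, s) := lap_sliceLL hF y s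
    have h3 : ‖gradient (fun z => f z s) y‖ ^ 2 = QQ F (y, s) := norm_grad_slice hFd s y
    have h4 : deriv (f y) s = pd F (0, 1) (y, s) := slice_snd hFd y s
    rw [h2, h3, h4] at h1
    show pd F (0, 1) (y, s) = a * F (y, s) + QQ F (y, s) + LL F (y, s)
    have hfy : F (y, s) = f y s := rfl
    rw [hfy]
    linarith [h1]
  -- first derivatives of the PDE on U
  have hpde1 : ∀ w, Set.EqOn (pd (pd F (0, 1)) w)
      (fun q => a * pd F w q + pd (QQ F) w q + pd (LL F) w q) U := by
    intro w q hq
    rw [pd_congr_of_isOpen hU hpde hq w]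
    exact pd_lin3 hFd hQd hLd a w q
  have hpde1p : ∀ w, pd (pd F (0, 1)) w (x, t)
      = a * pd F w (x, t) + pd (QQ F) w (x, t) + pd (LL F) w (x, t) := fun w => hpde1 w hpU
  -- second derivatives of the PDE at (x, t)
  have hpde2 : ∀ v w, pd (pd (pd F (0, 1)) w) v (x, t)
      = a * pd (pd F w) v (x, t) + pd (pd (QQ F) w) v (x, t) + pd (pd (LL F) w) v (x, t) := by
    intro v w
    rw [pd_congr_of_isOpen hU (hpde1 w) hpU v]
    exact pd_lin3 ((pd_contDiff hF w).differentiable (by simp))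
      ((pd_contDiff hQc w).differentiable (by simp))
      ((pd_contDiff hLc w).differentiable (by simp)) a v (x, t)
  have hft_p : pd F (0, 1) (x, t) = a * F (x, t) + QQ F (x, t) + LL F (x, t) := hpde hpU
  -- Clairaut swaps
  have hswap : ∀ i : Fin n, pd (pd F (EuclideanSpace.single i 1, 0)) (0, 1)
      = pd (pd F (0, 1)) (EuclideanSpace.single i 1, 0) :=
    fun i => funext fun q => pd_comm hF (0, 1) (EuclideanSpace.single i 1, 0) q
  -- value of G at p
  have hGp : GG F a β (x, t) = (1 - β) * QQ F (x, t) - β * LL F (x, t) := by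
    have h0 : GG F a β (x, t) = QQ F (x, t) + β * (a * F (x, t) - pd F (0, 1) (x, t)) := rfl
    rw [h0, hft_p]; ring
  -- derivatives of G
  have hDG : ∀ w, pd (GG F a β) w (x, t)
      = pd (QQ F) w (x, t) + β * (a * pd F w (x, t) - pd (pd F (0, 1)) w (x, t)) := by
    intro w
    have h0 : GG F a β = fun q => QQ F q + β * (a * F q - pd F (0, 1) q) := rfl
    rw [h0]
    exact pd_comb hQd hFd hftd β a w (x, t)
  have hDGe : ∀ i : Fin n, pd (GG F a β) (EuclideanSpace.single i 1, 0) (x, t)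
      = (1 - β) * pd (QQ F) (EuclideanSpace.single i 1, 0) (x, t)
        - β * pd (LL F) (EuclideanSpace.single i 1, 0) (x, t) := by
    intro i
    rw [hDG, hpde1p]; ring
  have hDGt : pd (GG F a β) (0, 1) (x, t)
      = (1 - β) * pd (QQ F) (0, 1) (x, t) - β * pd (LL F) (0, 1) (x, t) := by
    rw [hDG, hpde1p]; ring
  -- expansion of ∂ₜ Q at p
  have hDtQ : pd (QQ F) (0, 1) (x, t) = 2 * a * QQ F (x, t)
      + 2 * (∑ i : Fin n, pd F (EuclideanSpace.single i 1, 0) (x, t)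
          * pd (QQ F) (EuclideanSpace.single i 1, 0) (x, t))
      + 2 * (∑ i : Fin n, pd F (EuclideanSpace.single i 1, 0) (x, t)
          * pd (LL F) (EuclideanSpace.single i 1, 0) (x, t)) := by
    have h1 : pd (QQ F) (0, 1) (x, t)
        = ∑ i : Fin n, pd (fun q => pd F (EuclideanSpace.single i 1, 0) q ^ 2) (0, 1) (x, t) :=
      pd_sum _ _ (fun i => ((pd_contDiff hF _).pow 2).differentiable (by simp)) _ _
    have h2 : ∀ i : Fin n, pd (fun q => pd F (EuclideanSpace.single i 1, 0) q ^ 2) (0, 1) (x, t)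
        = 2 * a * pd F (EuclideanSpace.single i 1, 0) (x, t) ^ 2
          + 2 * (pd F (EuclideanSpace.single i 1, 0) (x, t)
            * pd (QQ F) (EuclideanSpace.single i 1, 0) (x, t))
          + 2 * (pd F (EuclideanSpace.single i 1, 0) (x, t)
            * pd (LL F) (EuclideanSpace.single i 1, 0) (x, t)) := by
      intro i
      rw [pd_sq ((pd_contDiff hF _).differentiable (by simp)), hswap i, hpde1p]
      ring
    rw [h1, Finset.sum_congr rfl fun i _ => h2 i]
    rw [Finset.sum_add_distrib, Finset.sum_add_distrib, ← Finset.mul_sum, ← Finset.mul_sum,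
      ← Finset.mul_sum]
    have hQval : QQ F (x, t)
        = ∑ i : Fin n, pd F (EuclideanSpace.single i 1, 0) (x, t) ^ 2 := rfl
    rw [hQval]
  -- expansion of ∂ₜ L at p
  have hDtL : pd (LL F) (0, 1) (x, t) = a * LL F (x, t)
      + (∑ i : Fin n, pd (pd (QQ F) (EuclideanSpace.single i 1, 0))
          (EuclideanSpace.single i 1, 0) (x, t))
      + (∑ i : Fin n, pd (pd (LL F) (EuclideanSpace.single i 1, 0))
          (EuclideanSpace.single i 1, 0) (x, t)) := by
    have h1 : pd (LL F) (0, 1) (x, t)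
        = ∑ i : Fin n, pd (pd (pd F (EuclideanSpace.single i 1, 0))
            (EuclideanSpace.single i 1, 0)) (0, 1) (x, t) :=
      pd_sum _ _ (fun i => (pd_contDiff (pd_contDiff hF _) _).differentiable (by simp)) _ _
    have h2 : ∀ i : Fin n, pd (pd (pd F (EuclideanSpace.single i 1, 0))
          (EuclideanSpace.single i 1, 0)) (0, 1) (x, t)
        = a * pd (pd F (EuclideanSpace.single i 1, 0)) (EuclideanSpace.single i 1, 0) (x, t)
          + pd (pd (QQ F) (EuclideanSpace.single i 1, 0)) (EuclideanSpace.single i 1, 0) (x, t)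
          + pd (pd (LL F) (EuclideanSpace.single i 1, 0)) (EuclideanSpace.single i 1, 0) (x, t) := by
      intro i
      rw [pd_comm (pd_contDiff hF _) (0, 1) (EuclideanSpace.single i 1, 0) (x, t), hswap i,
        hpde2]
    rw [h1, Finset.sum_congr rfl fun i _ => h2 i]
    rw [Finset.sum_add_distrib, Finset.sum_add_distrib, ← Finset.mul_sum]
    have hLval : LL F (x, t) = ∑ i : Fin n,
        pd (pd F (EuclideanSpace.single i 1, 0)) (EuclideanSpace.single i 1, 0) (x, t) := rfl
    rw [hLval]
  -- spatial Laplacian of G at p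
  have hLamG : (∑ i : Fin n, pd (pd (GG F a β) (EuclideanSpace.single i 1, 0))
        (EuclideanSpace.single i 1, 0) (x, t))
      = (1 - β) * (∑ i : Fin n, pd (pd (QQ F) (EuclideanSpace.single i 1, 0))
          (EuclideanSpace.single i 1, 0) (x, t))
        - β * (∑ i : Fin n, pd (pd (LL F) (EuclideanSpace.single i 1, 0))
          (EuclideanSpace.single i 1, 0) (x, t)) := by
    have hterm : ∀ i : Fin n, pd (pd (GG F a β) (EuclideanSpace.single i 1, 0))
          (EuclideanSpace.single i 1, 0) (x, t)
        = (1 - β) * pd (pd (QQ F) (EuclideanSpace.single i 1, 0))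
            (EuclideanSpace.single i 1, 0) (x, t)
          - β * pd (pd (LL F) (EuclideanSpace.single i 1, 0))
            (EuclideanSpace.single i 1, 0) (x, t) := by
      intro i
      have hfun : pd (GG F a β) (EuclideanSpace.single i 1, 0)
          = fun q => pd (QQ F) (EuclideanSpace.single i 1, 0) q
            + β * (a * pd F (EuclideanSpace.single i 1, 0) q
              - pd (pd F (0, 1)) (EuclideanSpace.single i 1, 0) q) := by
        funext q
        have h0 : GG F a β = fun q => QQ F q + β * (a * F q - pd F (0, 1) q) := rfl
        rw [h0]
        exact pd_comb hQd hFd hftd β a _ q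
      rw [hfun, pd_comb ((pd_contDiff hQc _).differentiable (by simp))
        ((pd_contDiff hF _).differentiable (by simp))
        ((pd_contDiff hftc _).differentiable (by simp)) β a _ (x, t), hpde2]
      ring
    rw [Finset.sum_congr rfl fun i _ => hterm i]
    rw [Finset.sum_sub_distrib, ← Finset.mul_sum, ← Finset.mul_sum]
  -- sum of fᵢ ∂ᵢ G
  have hSfi : (∑ i : Fin n, pd F (EuclideanSpace.single i 1, 0) (x, t)
        * pd (GG F a β) (EuclideanSpace.single i 1, 0) (x, t))
      = (1 - β) * (∑ i : Fin n, pd F (EuclideanSpace.single i 1, 0) (x, t)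
          * pd (QQ F) (EuclideanSpace.single i 1, 0) (x, t))
        - β * (∑ i : Fin n, pd F (EuclideanSpace.single i 1, 0) (x, t)
          * pd (LL F) (EuclideanSpace.single i 1, 0) (x, t)) := by
    have hterm : ∀ i : Fin n, pd F (EuclideanSpace.single i 1, 0) (x, t)
          * pd (GG F a β) (EuclideanSpace.single i 1, 0) (x, t)
        = (1 - β) * (pd F (EuclideanSpace.single i 1, 0) (x, t)
            * pd (QQ F) (EuclideanSpace.single i 1, 0) (x, t))
          - β * (pd F (EuclideanSpace.single i 1, 0) (x, t)
            * pd (LL F) (EuclideanSpace.single i 1, 0) (x, t)) := by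
      intro i; rw [hDGe i]; ring
    rw [Finset.sum_congr rfl fun i _ => hterm i]
    rw [Finset.sum_sub_distrib, ← Finset.mul_sum, ← Finset.mul_sum]
  -- ### Convert the Bochner hypothesis
  have hb := hBochner x t ht
  have hbQ : (fun y => ‖gradient (fun z => f z t) y‖ ^ 2) = fun y => QQ F (y, t) :=
    funext fun y => norm_grad_slice hFd t y
  rw [hbQ] at hb
  have hbL : (fun y => lap (fun z => f z t) y) = fun y => LL F (y, t) :=
    funext fun y => lap_sliceLL hF y t
  rw [hbL] at hb
  have hblapQ : lap (fun y => QQ F (y, t)) x = LL (QQ F) (x, t) := lap_sliceLL hQc x t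
  rw [hblapQ] at hb
  have hbI : ⟪gradient (fun y => LL F (y, t)) x, gradient (fun y => f y t) x⟫
      = ∑ i : Fin n, pd (LL F) (EuclideanSpace.single i 1, 0) (x, t)
        * pd F (EuclideanSpace.single i 1, 0) (x, t) := inner_grad_slice hLd hFd t x
  rw [hbI] at hb
  have hbn : ‖gradient (fun y => f y t) x‖ ^ 2 = QQ F (x, t) := norm_grad_slice hFd t x
  rw [hbn] at hb
  have hblf : lap (fun y => f y t) x = LL F (x, t) := lap_sliceLL hF x t
  rw [hblf] at hb
  have hLQ : LL (QQ F) (x, t) = ∑ i : Fin n, pd (pd (QQ F) (EuclideanSpace.single i 1, 0))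
      (EuclideanSpace.single i 1, 0) (x, t) := rfl
  rw [hLQ] at hb
  have hcomm : (∑ i : Fin n, pd (LL F) (EuclideanSpace.single i 1, 0) (x, t)
        * pd F (EuclideanSpace.single i 1, 0) (x, t))
      = ∑ i : Fin n, pd F (EuclideanSpace.single i 1, 0) (x, t)
        * pd (LL F) (EuclideanSpace.single i 1, 0) (x, t) :=
    Finset.sum_congr rfl fun i _ => mul_comm _ _
  rw [hcomm] at hb
  -- ### Convert the goal
  have hHfun : (fun y => t * (‖gradient (fun z => f z t) y‖ ^ 2
        + β * (a * f y t - deriv (f y) t)))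
      = fun y => t * GG F a β (y, t) := by
    funext y
    have h3 : ‖gradient (fun z => f z t) y‖ ^ 2 = QQ F (y, t) := norm_grad_slice hFd t y
    have h4 : deriv (f y) t = pd F (0, 1) (y, t) := slice_snd hFd y t
    rw [h3, h4]
    rfl
  rw [hHfun]
  have htGc : ContDiff ℝ (⊤ : ℕ∞) (fun q => t * GG F a β q) := contDiff_const.mul hGc
  have hlap : lap (fun y => t * GG F a β (y, t)) x = LL (fun q => t * GG F a β q) (x, t) :=
    lap_sliceLL htGc x t
  rw [hlap]
  have hLLtG : LL (fun q => t * GG F a β q) (x, t)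
      = t * ∑ i : Fin n, pd (pd (GG F a β) (EuclideanSpace.single i 1, 0))
          (EuclideanSpace.single i 1, 0) (x, t) := by
    have h1 : ∀ i : Fin n, pd (fun q => t * GG F a β q) (EuclideanSpace.single i 1, 0)
        = fun q => t * pd (GG F a β) (EuclideanSpace.single i 1, 0) q :=
      fun i => funext fun q => pd_const_mul hGd t _ q
    have h2 : LL (fun q => t * GG F a β q) (x, t)
        = ∑ i : Fin n, pd (pd (fun q => t * GG F a β q) (EuclideanSpace.single i 1, 0))
            (EuclideanSpace.single i 1, 0) (x, t) := rfl
    have h3 : ∀ i : Fin n, pd (pd (fun q => t * GG F a β q) (EuclideanSpace.single i 1, 0))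
        (EuclideanSpace.single i 1, 0) (x, t)
        = t * pd (pd (GG F a β) (EuclideanSpace.single i 1, 0))
            (EuclideanSpace.single i 1, 0) (x, t) := by
      intro i
      rw [h1 i]
      exact pd_const_mul ((pd_contDiff hGc _).differentiable (by simp)) t _ (x, t)
    rw [h2, Finset.sum_congr rfl fun i _ => h3 i, ← Finset.mul_sum]
  rw [hLLtG, hLamG]
  have hinner : ⟪gradient (fun y => f y t) x, gradient (fun y => t * GG F a β (y, t)) x⟫
      = ∑ i : Fin n, pd F (EuclideanSpace.single i 1, 0) (x, t)
        * pd (fun q => t * GG F a β q) (EuclideanSpace.single i 1, 0) (x, t) :=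
    inner_grad_slice hFd (htGc.differentiable (by simp)) t x
  rw [hinner]
  have hinner2 : (∑ i : Fin n, pd F (EuclideanSpace.single i 1, 0) (x, t)
        * pd (fun q => t * GG F a β q) (EuclideanSpace.single i 1, 0) (x, t))
      = t * ∑ i : Fin n, pd F (EuclideanSpace.single i 1, 0) (x, t)
        * pd (GG F a β) (EuclideanSpace.single i 1, 0) (x, t) := by
    rw [Finset.mul_sum]
    refine Finset.sum_congr rfl fun i _ => ?_
    rw [pd_const_mul hGd t _ (x, t)]
    ring
  rw [hinner2, hSfi]
  -- time derivative of H at (x, t)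
  have hder_fun : (fun s => s * (‖gradient (fun z => f z s) x‖ ^ 2
        + β * (a * f x s - deriv (f x) s)))
      = fun s => s * GG F a β (x, s) := by
    funext s
    have h3 : ‖gradient (fun z => f z s) x‖ ^ 2 = QQ F (x, s) := norm_grad_slice hFd s x
    have h4 : deriv (f x) s = pd F (0, 1) (x, s) := slice_snd hFd x s
    rw [h3, h4]
    rfl
  rw [hder_fun]
  have hder : deriv (fun s => s * GG F a β (x, s)) t
      = GG F a β (x, t) + t * pd (GG F a β) (0, 1) (x, t) := by
    have h1 : HasDerivAt (fun s => GG F a β (x, s)) (pd (GG F a β) (0, 1) (x, t)) t :=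
      hasDerivAt_slice hGd x t
    have h2 := (hasDerivAt_id' t).mul h1
    have h3 := h2.deriv
    simp only [one_mul] at h3; exact h3
  rw [hder, hDGt, hDtQ, hDtL]
  -- RHS occurrences of H x t
  have hHxt : t * (‖gradient (fun z => f z t) x‖ ^ 2 + β * (a * f x t - deriv (f x) t))
      = t * GG F a β (x, t) := by
    have h3 : ‖gradient (fun z => f z t) x‖ ^ 2 = QQ F (x, t) := norm_grad_slice hFd t x
    have h4 : deriv (f x) t = pd F (0, 1) (x, t) := slice_snd hFd x t
    rw [h3, h4]
    rfl
  rw [hHxt, hbn, hGp]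
  -- simplify the division terms
  have hLeq : -(t * ((1 - β) * QQ F (x, t) - β * LL F (x, t))) / (β * t)
      - (1 - 1 / β) * QQ F (x, t) = LL F (x, t) := by
    field_simp
    ring
  rw [hLeq]
  have hdiv : t * ((1 - β) * QQ F (x, t) - β * LL F (x, t)) / t
      = (1 - β) * QQ F (x, t) - β * LL F (x, t) :=
    mul_div_cancel_left₀ _ (ne_of_gt ht0)
  rw [hdiv]
  -- final algebra
  have hb2 : 0 ≤ t * ((1 / 2 * (∑ i : Fin n, pd (pd (QQ F) (EuclideanSpace.single i 1, 0))
        (EuclideanSpace.single i 1, 0) (x, t))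
      - ∑ i : Fin n, pd F (EuclideanSpace.single i 1, 0) (x, t)
        * pd (LL F) (EuclideanSpace.single i 1, 0) (x, t))
      - (-K * QQ F (x, t) + LL F (x, t) ^ 2 / N)) :=
    mul_nonneg ht0.le (by linarith [hb])
  set q1 := QQ F (x, t) with hq1
  set l1 := LL F (x, t) with hl1
  set A1 := ∑ i : Fin n, pd (pd (QQ F) (EuclideanSpace.single i 1, 0)) (EuclideanSpace.single i 1, 0) (x, t) with hA1
  set B1 := ∑ i : Fin n, pd (pd (LL F) (EuclideanSpace.single i 1, 0)) (EuclideanSpace.single i 1, 0) (x, t) with hB1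
  set C1 := ∑ i : Fin n, pd F (EuclideanSpace.single i 1, 0) (x, t) * pd (QQ F) (EuclideanSpace.single i 1, 0) (x, t) with hC1
  set D1 := ∑ i : Fin n, pd F (EuclideanSpace.single i 1, 0) (x, t) * pd (LL F) (EuclideanSpace.single i 1, 0) (x, t) with hD1
  have hNe : N ≠ 0 := ne_of_gt hN
  rw [ge_iff_le, ← sub_nonneg]
  have key : t * ((1 - β) * A1 - β * B1) + 2 * (t * ((1 - β) * C1 - β * D1))
      - ((1 - β) * q1 - β * l1 + t * ((1 - β) * (2 * a * q1 + 2 * C1 + 2 * D1)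
        - β * (a * l1 + A1 + B1)))
      - (2 * t / N * l1 ^ 2 + t * ((β - 1) * a - 2 * K) * q1
        - a * (t * ((1 - β) * q1 - β * l1)) - ((1 - β) * q1 - β * l1))
      = 2 * (t * ((1 / 2 * A1 - D1) - (-K * q1 + l1 ^ 2 / N))) := by
    field_simp
    ring
  rw [key]
  linarith [hb2]
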